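/- Let n ≥ 1 be an integer and λ ∈ ℝ with λ > 0, and set μ := √(n² + λ), a := (n−μ)/2, b := (n+μ)/2, c := n + 1/2. Then Σ_{k=0}^∞ (a)_k (b)_k / (k! (c)_k) = 0 (i.e. the boundary value ψ₁(λ,1) of the hypergeometric solution vanishes) if and only if there exists a nonnegative integer m such that λ = (2m+1)((2m+1) + 2n). In particular, the eigenvalues of the radial closed eigenvalue problem arising from odd (antisymmetric) solutions are exactly λ_{2m+1} = (2m+1)(2m+1+2n), m ≥ 0. -/

import Mathlib

open Set Filter
open scoped Topology Real

/-- Pochhammer symbol `(d)_k = d(d+1)⋯(d+k−1)` over the reals. -/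
noncomputable def poch (d : ℝ) (k : ℕ) : ℝ := Polynomial.eval d (ascPochhammer ℝ k)

/-- The `k`-th coefficient `(a)_k (b)_k / (k! (c)_k)` of the Gauss hypergeometric series. -/
noncomputable def hypCoeff (a b c : ℝ) (k : ℕ) : ℝ :=
  poch a k * poch b k / ((k.factorial : ℝ) * poch c k)

/-- The Gauss hypergeometric series `F(a,b,c,x) = Σ_k ((a)_k (b)_k / (k! (c)_k)) x^k`. -/
noncomputable def hypF (a b c x : ℝ) : ℝ := ∑' k : ℕ, hypCoeff a b c k * x ^ k

/-- The first hypergeometric solution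
`ψ₁(λ,ρ) = F((n−μ)/2, (n+μ)/2, n + 1/2, ρ²)` with `μ = √(n² + λ)`. -/
noncomputable def psi1 (n : ℕ) (lam ρ : ℝ) : ℝ :=
  hypF (((n : ℝ) - Real.sqrt ((n : ℝ) ^ 2 + lam)) / 2)
    (((n : ℝ) + Real.sqrt ((n : ℝ) ^ 2 + lam)) / 2) ((n : ℝ) + 1 / 2) (ρ ^ 2)

/-- The second hypergeometric solution
`ψ₂(λ,ρ) = ρ^{1−2n} F((1−n−μ)/2, (1−n+μ)/2, 3/2 − n, ρ²)` with `μ = √(n² + λ)`. -/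
noncomputable def psi2 (n : ℕ) (lam ρ : ℝ) : ℝ :=
  hypF ((1 - (n : ℝ) - Real.sqrt ((n : ℝ) ^ 2 + lam)) / 2)
    ((1 - (n : ℝ) + Real.sqrt ((n : ℝ) ^ 2 + lam)) / 2) (3 / 2 - (n : ℝ)) (ρ ^ 2)
    / ρ ^ (2 * n - 1)

/-- The radial equation
`(1−ρ²)·φ''(ρ) + ((2n − (2n+1)ρ²)/ρ)·φ'(ρ) = −λ·φ(ρ)` at the point `ρ`. -/
def RadialEq (n : ℕ) (lam : ℝ) (φ : ℝ → ℝ) (ρ : ℝ) : Prop :=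
  (1 - ρ ^ 2) * deriv (deriv φ) ρ
    + ((2 * (n : ℝ) - (2 * (n : ℝ) + 1) * ρ ^ 2) / ρ) * deriv φ ρ = -lam * φ ρ


/-!
Write `F(c) = F(a, b, c, 1)` and assume `a + b < c`. The coefficients are
`O(k ^ -(1 + (c - a - b) / 2))`, and summing the coefficientwise contiguous identity (whose
right-hand side telescopes) gives Gauss's relation `c (c - a - b) F(c) = (c - a) (c - b) F(c + 1)`.
At `c = b` the right-hand side vanishes, so `F(b) = 0`, and the relation carries this zero down to
`b - j`. Conversely, if no `c + j` equals `a` or `b`, a zero at `c` is carried up to every `c + J`,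
contradicting `F(c + J) → 1`. So `F(c) = 0` iff `a` or `b` lies in `c + ℕ`.
For `ψ₁` we have `a < c`, and `b = c + m` means `μ = n + 2m + 1`, i.e.
`λ = (2m + 1)(2m + 1 + 2n)`.
-/

lemma poch_zero (d : ℝ) : poch d 0 = 1 := by simp [poch]

lemma poch_succ_right (d : ℝ) (k : ℕ) : poch d (k + 1) = poch d k * (d + k) :=
  ascPochhammer_succ_eval k d

lemma poch_succ_left (d : ℝ) (k : ℕ) : poch d (k + 1) = d * poch (d + 1) k := by
  simp [poch, ascPochhammer_succ_left, Polynomial.eval_comp]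

lemma poch_pos {d : ℝ} (hd : 0 < d) (k : ℕ) : 0 < poch d k := ascPochhammer_pos k d hd

lemma poch_le_poch {d e : ℝ} (hd : 0 < d) (hde : d ≤ e) (k : ℕ) : poch d k ≤ poch e k := by
  induction k with
  | zero => simp [poch_zero]
  | succ k ih =>
    rw [poch_succ_right, poch_succ_right]
    have := poch_pos hd k
    have := poch_pos (hd.trans_le hde) k
    gcongr

lemma mul_poch_le_mul_poch {c J : ℝ} (hc : 0 < c) (hJ : 0 ≤ J) {k : ℕ} (hk : k ≠ 0) :
    (c + J) * poch c k ≤ c * poch (c + J) k := by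
  obtain ⟨k, rfl⟩ := Nat.exists_eq_succ_of_ne_zero hk
  rw [poch_succ_left, poch_succ_left]
  have := mul_le_mul_of_nonneg_left
    (poch_le_poch (by linarith : 0 < c + 1) (by linarith : c + 1 ≤ c + J + 1) k)
    (by positivity : 0 ≤ c * (c + J))
  linarith

lemma hypCoeff_zero (a b c : ℝ) : hypCoeff a b c 0 = 1 := by simp [hypCoeff, poch_zero]

lemma hypCoeff_comm (a b c : ℝ) (k : ℕ) : hypCoeff a b c k = hypCoeff b a c k := by
  rw [hypCoeff, hypCoeff, mul_comm (poch a k)]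

section Coefficients

variable {c : ℝ} (hc : 0 < c) (a b : ℝ) (k : ℕ)
include hc

lemma hypCoeff_succ :
    hypCoeff a b c (k + 1) = hypCoeff a b c k * ((a + k) * (b + k) / ((k + 1) * (c + k))) := by
  have := (poch_pos hc k).ne'
  simp only [hypCoeff, poch_succ_right, Nat.factorial_succ, Nat.cast_mul, Nat.cast_succ]
  field_simp

lemma hypCoeff_add_one_right : hypCoeff a b (c + 1) k = hypCoeff a b c k * (c / (c + k)) := by
  have := (poch_pos hc k).ne'
  have := (poch_pos (by linarith : 0 < c + 1) k).ne'
  have hshift : poch c k * (c + k) = c * poch (c + 1) k := by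
    rw [← poch_succ_right, poch_succ_left]
  simp only [hypCoeff]
  field_simp
  linear_combination poch a k * poch b k * hshift

lemma hypCoeff_contiguous :
    c * (c - a - b) * hypCoeff a b c k - (c - a) * (c - b) * hypCoeff a b (c + 1) k
      = c * (k * hypCoeff a b c k - (k + 1) * hypCoeff a b c (k + 1)) := by
  rw [hypCoeff_succ hc, hypCoeff_add_one_right hc]
  field_simp
  ring

lemma abs_hypCoeff_add_le {J : ℝ} (hJ : 0 ≤ J) (hk : k ≠ 0) :
    |hypCoeff a b (c + J) k| ≤ c / (c + J) * |hypCoeff a b c k| := by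
  have hpc := poch_pos hc k
  have hpcJ := poch_pos (by linarith : 0 < c + J) k
  have hle := mul_poch_le_mul_poch hc hJ hk
  have hfac : (0 : ℝ) < k.factorial := by positivity
  simp only [hypCoeff, abs_div, abs_mul, abs_of_pos hfac, abs_of_pos hpc, abs_of_pos hpcJ]
  rw [div_mul_div_comm, div_le_div_iff₀ (by positivity) (by positivity)]
  have := mul_le_mul_of_nonneg_left hle
    (by positivity : 0 ≤ |poch a k| * |poch b k| * (k.factorial : ℝ))
  nlinarith

end Coefficients

lemma hypF_one (a b c : ℝ) : hypF a b c 1 = ∑' k, hypCoeff a b c k := by simp [hypF]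

lemma hypF_comm (a b c x : ℝ) : hypF a b c x = hypF b a c x := by
  simp only [hypF, hypCoeff_comm a b]

section AtOne

open Asymptotics

variable {a b c : ℝ} (hc : 0 < c) (habc : a + b < c)
include hc habc

/-- Raabe's test: with `s = c - a - b > 0` the term ratio is `1 - (1 + s) / k + O(1 / k²)`, and by
Bernoulli's inequality `(k / (k + 1)) ^ (1 + s / 2) ≥ 1 - (1 + s / 2) / (k + 1)`. -/
lemma eventually_abs_hypCoeff_succ_mul_rpow_le :
    ∀ᶠ k : ℕ in atTop, |hypCoeff a b c (k + 1)| * ((k : ℝ) + 1) ^ (1 + (c - a - b) / 2)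
      ≤ |hypCoeff a b c k| * (k : ℝ) ^ (1 + (c - a - b) / 2) := by
  set s := c - a - b with hs_def
  have hs : 0 < s := by linarith
  filter_upwards [tendsto_natCast_atTop_atTop.eventually_ge_atTop (1 - a),
    tendsto_natCast_atTop_atTop.eventually_ge_atTop (1 - b),
    tendsto_natCast_atTop_atTop.eventually_ge_atTop (2 * (a * b + c * s / 2) / s)]
    with k hka hkb hlarge
  have hk : (0 : ℝ) ≤ k := k.cast_nonneg
  have hpoly : (a + k) * (b + k) ≤ (c + k) * (k - s / 2) := by
    rw [div_le_iff₀ hs] at hlarge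
    nlinarith
  have hbernoulli : (k - s / 2) / (k + 1) ≤ ((k : ℝ) / (k + 1)) ^ (1 + s / 2) := by
    have := one_add_mul_self_le_rpow_one_add (s := -1 / (k + 1))
      (by rw [neg_div, neg_le_neg_iff, div_le_one (by positivity)]; linarith)
      (p := 1 + s / 2) (by linarith)
    convert this using 2 <;> field_simp <;> ring
  have hratio :
      (a + k) * (b + k) / ((k + 1) * (c + k)) ≤ ((k : ℝ) / (k + 1)) ^ (1 + s / 2) := by
    refine le_trans ?_ hbernoulli
    rw [div_le_div_iff₀ (by positivity) (by positivity)]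
    nlinarith
  have hratio_nonneg : 0 ≤ (a + k) * (b + k) / ((k + 1) * (c + k)) :=
    div_nonneg (mul_nonneg (by linarith) (by linarith)) (by positivity)
  rw [hypCoeff_succ hc, abs_mul, abs_of_nonneg hratio_nonneg]
  calc |hypCoeff a b c k| * ((a + k) * (b + k) / ((k + 1) * (c + k)))
        * ((k : ℝ) + 1) ^ (1 + s / 2)
      ≤ |hypCoeff a b c k| * ((k : ℝ) / (k + 1)) ^ (1 + s / 2)
        * ((k : ℝ) + 1) ^ (1 + s / 2) := by gcongr
    _ = |hypCoeff a b c k| * (k : ℝ) ^ (1 + s / 2) := by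
        rw [mul_assoc, ← Real.mul_rpow (by positivity) (by positivity),
          div_mul_cancel₀ _ (by positivity)]

lemma hypCoeff_isBigO :
    hypCoeff a b c =O[atTop] fun k : ℕ => (k : ℝ) ^ (-(1 + (c - a - b) / 2)) := by
  obtain ⟨K, hK⟩ := eventually_atTop.1
    ((eventually_abs_hypCoeff_succ_mul_rpow_le hc habc).and (eventually_ge_atTop 1))
  have hmono : ∀ k ≥ K, |hypCoeff a b c k| * (k : ℝ) ^ (1 + (c - a - b) / 2)
      ≤ |hypCoeff a b c K| * (K : ℝ) ^ (1 + (c - a - b) / 2) := by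
    intro k hk
    induction k, hk using Nat.le_induction with
    | base => exact le_rfl
    | succ k hk ih => exact le_trans (by exact_mod_cast (hK k hk).1) ih
  refine IsBigO.of_bound (|hypCoeff a b c K| * (K : ℝ) ^ (1 + (c - a - b) / 2)) ?_
  filter_upwards [eventually_ge_atTop K] with k hk
  have hk0 : (0 : ℝ) < k := by exact_mod_cast (hK k hk).2
  rw [Real.norm_eq_abs, Real.norm_of_nonneg (by positivity), Real.rpow_neg hk0.le,
    ← div_eq_mul_inv, le_div_iff₀ (by positivity)]
  exact hmono k hk

lemma summable_hypCoeff : Summable (hypCoeff a b c) :=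
  summable_of_isBigO_nat (Real.summable_nat_rpow.2 (by linarith)) (hypCoeff_isBigO hc habc)

lemma tendsto_natCast_mul_hypCoeff :
    Tendsto (fun k : ℕ => (k : ℝ) * hypCoeff a b c k) atTop (𝓝 0) := by
  have hdecay : Tendsto (fun k : ℕ => (k : ℝ) ^ (-((c - a - b) / 2))) atTop (𝓝 0) :=
    (tendsto_rpow_neg_atTop (by linarith)).comp tendsto_natCast_atTop_atTop
  refine IsBigO.trans_tendsto ?_ hdecay
  refine ((isBigO_refl (fun k : ℕ => (k : ℝ)) atTop).mul (hypCoeff_isBigO hc habc)).congr'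
    (Eventually.of_forall fun _ => rfl) ?_
  filter_upwards [eventually_ne_atTop 0] with k hk
  rw [show -((c - a - b) / 2) = -(1 + (c - a - b) / 2) + 1 by ring,
    Real.rpow_add_one (by exact_mod_cast hk), mul_comm]

theorem hypF_one_contiguous :
    c * (c - a - b) * hypF a b c 1 = (c - a) * (c - b) * hypF a b (c + 1) 1 := by
  have hsum := (summable_hypCoeff hc habc).hasSum
  have hsum₁ :=
    (summable_hypCoeff (a := a) (b := b) (c := c + 1) (by linarith) (by linarith)).hasSum
  have hpartial : ∀ N : ℕ, ∑ k ∈ Finset.range N,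
      (c * (c - a - b) * hypCoeff a b c k - (c - a) * (c - b) * hypCoeff a b (c + 1) k)
        = -(c * (N * hypCoeff a b c N)) := by
    intro N
    induction N with
    | zero => simp
    | succ N ih =>
      rw [Finset.sum_range_succ, ih, hypCoeff_contiguous hc]
      push_cast
      ring
  have hzero : HasSum (fun k =>
      c * (c - a - b) * hypCoeff a b c k - (c - a) * (c - b) * hypCoeff a b (c + 1) k) 0 := by
    rw [((hsum.mul_left _).sub (hsum₁.mul_left _)).summable.hasSum_iff_tendsto_nat]
    simp only [hpartial]
    simpa using ((tendsto_natCast_mul_hypCoeff hc habc).const_mul c).neg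
  rw [hypF_one, hypF_one, ← sub_eq_zero]
  exact ((hsum.mul_left _).sub (hsum₁.mul_left _)).unique hzero

theorem hypF_one_eq_zero_of_eq_add_nat {j : ℕ} (hb : b = c + j) : hypF a b c 1 = 0 := by
  induction j generalizing c with
  | zero =>
    have hrel := hypF_one_contiguous hc habc
    rw [Nat.cast_zero, add_zero] at hb
    subst hb
    rw [sub_self, mul_zero, zero_mul] at hrel
    exact (mul_eq_zero.1 hrel).resolve_left (mul_ne_zero hc.ne' (by linarith))
  | succ j ih =>
    have hnext := ih (c := c + 1) (by linarith) (by linarith) (by push_cast at hb; linarith)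
    have hrel := hypF_one_contiguous hc habc
    rw [hnext, mul_zero] at hrel
    exact (mul_eq_zero.1 hrel).resolve_left (mul_ne_zero hc.ne' (by linarith))

lemma tendsto_hypF_one_add_nat :
    Tendsto (fun J : ℕ => hypF a b (c + J) 1) atTop (𝓝 1) := by
  have htail := (summable_nat_add_iff 1).2 (summable_hypCoeff hc habc).abs
  have hbound : ∀ J : ℕ,
      |hypF a b (c + J) 1 - 1| ≤ c / (c + J) * ∑' k, |hypCoeff a b c (k + 1)| := by
    intro J
    have hsumJ := summable_hypCoeff (a := a) (b := b) (c := c + J) (by positivity)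
      (by linarith [J.cast_nonneg (α := ℝ)])
    have htailJ : Summable fun k => |hypCoeff a b (c + J) (k + 1)| :=
      (summable_nat_add_iff 1).2 hsumJ.abs
    rw [hypF_one, hsumJ.tsum_eq_zero_add, hypCoeff_zero, add_sub_cancel_left, ← tsum_mul_left]
    calc |∑' k, hypCoeff a b (c + J) (k + 1)| ≤ ∑' k, |hypCoeff a b (c + J) (k + 1)| :=
          by simpa only [Real.norm_eq_abs] using
            norm_tsum_le_tsum_norm (f := fun k => hypCoeff a b (c + J) (k + 1)) htailJ
      _ ≤ ∑' k, c / (c + J) * |hypCoeff a b c (k + 1)| :=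
          htailJ.tsum_le_tsum
            (fun k => abs_hypCoeff_add_le hc a b (k + 1) J.cast_nonneg k.succ_ne_zero)
            (htail.mul_left _)
  have hlim :
      Tendsto (fun J : ℕ => c / (c + J) * ∑' k, |hypCoeff a b c (k + 1)|) atTop (𝓝 0) := by
    simpa using (tendsto_const_nhds.div_atTop
      (tendsto_atTop_add_const_left _ c tendsto_natCast_atTop_atTop)).mul_const
        (∑' k, |hypCoeff a b c (k + 1)|)
  rw [tendsto_iff_norm_sub_tendsto_zero]
  exact squeeze_zero (fun _ => norm_nonneg _) hbound hlim

lemma hypF_one_add_nat_eq_zero (ha : ∀ j : ℕ, a ≠ c + j) (hb : ∀ j : ℕ, b ≠ c + j)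
    (h : hypF a b c 1 = 0) (J : ℕ) : hypF a b (c + J) 1 = 0 := by
  induction J with
  | zero => simpa using h
  | succ J ih =>
    have hrel := hypF_one_contiguous (a := a) (b := b) (c := c + J) (by positivity)
      (by linarith [J.cast_nonneg (α := ℝ)])
    rw [ih, mul_zero, eq_comm, mul_eq_zero] at hrel
    rw [Nat.cast_succ, ← add_assoc]
    exact hrel.resolve_left
      (mul_ne_zero (sub_ne_zero.2 (ha J).symm) (sub_ne_zero.2 (hb J).symm))

theorem hypF_one_eq_zero_iff : hypF a b c 1 = 0 ↔ ∃ j : ℕ, a = c + j ∨ b = c + j := by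
  constructor
  · intro h
    by_contra! hne
    have hzero := hypF_one_add_nat_eq_zero hc habc (fun j => (hne j).1) (fun j => (hne j).2) h
    refine one_ne_zero (tendsto_nhds_unique (tendsto_hypF_one_add_nat hc habc) ?_)
    simpa only [hzero] using tendsto_const_nhds
  · rintro ⟨j, ha | hb⟩
    · rw [hypF_comm]
      exact hypF_one_eq_zero_of_eq_add_nat hc (by linarith) ha
    · exact hypF_one_eq_zero_of_eq_add_nat hc habc hb

end AtOne

theorem hyp_series_at_one_eq_zero_iff_general (n : ℕ) (lam : ℝ) :
    (∑' k : ℕ,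
        hypCoeff (((n : ℝ) - Real.sqrt ((n : ℝ) ^ 2 + lam)) / 2)
          (((n : ℝ) + Real.sqrt ((n : ℝ) ^ 2 + lam)) / 2) ((n : ℝ) + 1 / 2) k) = 0 ↔
      ∃ m : ℕ, lam = (2 * (m : ℝ) + 1) * ((2 * (m : ℝ) + 1) + 2 * (n : ℝ)) := by
  have hμ := Real.sqrt_nonneg ((n : ℝ) ^ 2 + lam)
  rw [← hypF_one, hypF_one_eq_zero_iff (by positivity) (by linarith)]
  refine exists_congr fun m => ?_
  have hm := m.cast_nonneg (α := ℝ)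
  have hb_iff : ((n : ℝ) + Real.sqrt ((n : ℝ) ^ 2 + lam)) / 2 = n + 1 / 2 + m ↔
      Real.sqrt ((n : ℝ) ^ 2 + lam) = n + 2 * m + 1 := by
    constructor <;> intro h <;> linarith
  rw [hb_iff, Real.sqrt_eq_iff_mul_self_eq_of_pos (by positivity)]
  constructor
  · rintro (h | h) <;> linarith
  · intro hlam
    exact Or.inr (by rw [hlam]; ring)

/-- the value of the hypergeometric series at `1` (i.e. `ψ₁(λ,1)`)
vanishes iff `λ = (2m+1)((2m+1)+2n)` for some nonnegative integer `m`. -/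
theorem hyp_series_at_one_eq_zero_iff (n : ℕ) (hn : 1 ≤ n) (lam : ℝ)
    (hlam : 0 < lam) :
    (∑' k : ℕ,
        hypCoeff (((n : ℝ) - Real.sqrt ((n : ℝ) ^ 2 + lam)) / 2)
          (((n : ℝ) + Real.sqrt ((n : ℝ) ^ 2 + lam)) / 2) ((n : ℝ) + 1 / 2) k) = 0 ↔
      ∃ m : ℕ, lam = (2 * (m : ℝ) + 1) * ((2 * (m : ℝ) + 1) + 2 * (n : ℝ)) :=
  hyp_series_at_one_eq_zero_iff_general n lam
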